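/- arXiv:1103.0172 — 3 statements merged into one kernel-verified Lean document; each statement's English description precedes it below -/
import Mathlib

section
/- Let D be a finite set of points in R^d, Q a subset of D, o a point of D \ Q, and k a positive integer with |Q| <= k. Define o to be an inverse k-NN result for Q in D if for every q in Q, the number of points p in D \ {q} with d(o,p) < d(o,q) is at most k-1. If o is an inverse k-NN result for Q in D, then for every q in Q, the number of points p in (D \ Q) with d(o,p) < d(o,q) is at most k' - 1, where k' = k - |Q| + 1. -/
open scoped Classical

/-- Lemma 1 (inverse kNN pruning): if `o` is an inverse `k`-NN result for `Q` in `D`,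
then for every `q ∈ Q`, at most `k' - 1` points of `D \ Q` are strictly closer to `o`
than `q`, where `k' = k - |Q| + 1`. -/
theorem inverse_kNN_query_reduction {d : ℕ}
    (D Q : Finset (EuclideanSpace ℝ (Fin d))) (hQD : Q ⊆ D)
    (o : EuclideanSpace ℝ (Fin d)) (ho : o ∈ D \ Q)
    (k : ℕ) (hk : 0 < k) (hQk : Q.card ≤ k)
    (hdistinct : ∀ p ∈ D, ∀ p' ∈ D, p ≠ p' → dist o p ≠ dist o p')
    (hres : ∀ q ∈ Q,
      (((D.erase q).filter (fun p => dist o p < dist o q)).card : ℤ) ≤ (k : ℤ) - 1) :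
    ∀ q ∈ Q,
      ((((D \ Q)).filter (fun p => dist o p < dist o q)).card : ℤ) ≤
        ((k : ℤ) - Q.card + 1) - 1 := by
  intro q hq
  -- choose the farthest query point q₀
  obtain ⟨q0, hq0, hmax⟩ := Q.exists_max_image (fun p => dist o p) ⟨q, hq⟩
  -- all other points of Q are strictly closer than q₀
  have hstrict : ∀ q' ∈ Q, q' ≠ q0 → dist o q' < dist o q0 := by
    intro q' hq' hne
    exact lt_of_le_of_ne (hmax q' hq') (hdistinct q' (hQD hq') q0 (hQD hq0) hne)
  set A := (D \ Q).filter (fun p => dist o p < dist o q) with hA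
  set B := Q.erase q0 with hB
  set C := (D.erase q0).filter (fun p => dist o p < dist o q0) with hC
  have hAsub : A ⊆ C := by
    intro p hp
    simp only [hA, Finset.mem_filter, Finset.mem_sdiff] at hp
    obtain ⟨⟨hpD, hpQ⟩, hplt⟩ := hp
    refine Finset.mem_filter.mpr ⟨Finset.mem_erase.mpr ⟨?_, hpD⟩, ?_⟩
    · rintro rfl; exact hpQ hq0
    · exact lt_of_lt_of_le hplt (hmax q hq)
  have hBsub : B ⊆ C := by
    intro p hp
    rw [hB, Finset.mem_erase] at hp
    exact Finset.mem_filter.mpr ⟨Finset.mem_erase.mpr ⟨hp.1, hQD hp.2⟩,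
      hstrict p hp.2 hp.1⟩
  have hdisj : Disjoint A B := by
    refine Finset.disjoint_left.mpr ?_
    intro p hp hpB
    simp only [hA, Finset.mem_filter, Finset.mem_sdiff] at hp
    exact hp.1.2 (Finset.mem_of_mem_erase hpB)
  have hunion : A.card + B.card ≤ C.card := by
    rw [← Finset.card_union_of_disjoint hdisj]
    exact Finset.card_le_card (Finset.union_subset hAsub hBsub)
  have hBcard : B.card = Q.card - 1 := Finset.card_erase_of_mem hq0
  have hCk : (C.card : ℤ) ≤ (k : ℤ) - 1 := hres q0 hq0
  have hQpos : 1 ≤ Q.card := Finset.card_pos.mpr ⟨q, hq⟩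
  have : (A.card : ℤ) + ((Q.card : ℤ) - 1) ≤ (k : ℤ) - 1 := by
    have := hunion
    rw [hBcard] at this
    have h' : ((A.card + (Q.card - 1) : ℕ) : ℤ) ≤ (C.card : ℤ) := by exact_mod_cast this
    push_cast [hQpos] at h'
    linarith
  linarith
end

section
/- Let D be a finite set of points in R^d, Q ⊆ D, o in D \ Q, and q_ref in Q with d(o,q_ref) >= d(o,q) for all q in Q. Then o is an inverse k-NN result for Q in D (i.e., every q in Q is among the k nearest neighbors of o in D) if and only if at most k' - 1 points of D \ Q are strictly closer to o than q_ref, where k' = k - |Q| + 1. -/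
open scoped Classical

/-- Lemma 2: with `q_ref` the farthest query point from `o`, `o` is an inverse
`k`-NN result for `Q` in `D` iff at most `k' - 1` points of `D \ Q` are strictly
closer to `o` than `q_ref`, where `k' = k - |Q| + 1`. -/
theorem inverse_kNN_query_point_filter {d : ℕ}
    (D Q : Finset (EuclideanSpace ℝ (Fin d))) (hQD : Q ⊆ D)
    (o : EuclideanSpace ℝ (Fin d)) (ho : o ∈ D \ Q)
    (k : ℕ) (hQk : Q.card ≤ k)
    (qref : EuclideanSpace ℝ (Fin d)) (hqref : qref ∈ Q)
    (hmax : ∀ q ∈ Q, dist o q ≤ dist o qref)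
    (hdistinct : ∀ p ∈ D, ∀ p' ∈ D, p ≠ p' → dist o p ≠ dist o p') :
    (∀ q ∈ Q,
      (((D.erase q).filter (fun p => dist o p < dist o q)).card : ℤ) ≤ (k : ℤ) - 1) ↔
      ((((D \ Q)).filter (fun p => dist o p < dist o qref)).card : ℤ) ≤
        ((k : ℤ) - Q.card + 1) - 1 := by
  have hQ1 : 1 ≤ Q.card := Finset.card_pos.2 ⟨qref, hqref⟩
  constructor
  · intro h
    have h1 := h qref hqref
    have hsub : Q.erase qref ∪ (D \ Q).filter (fun p => dist o p < dist o qref) ⊆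
        (D.erase qref).filter (fun p => dist o p < dist o qref) := by
      intro p hp
      rcases Finset.mem_union.1 hp with hp | hp
      · have hpQ := Finset.mem_of_mem_erase hp
        have hpne : p ≠ qref := Finset.ne_of_mem_erase hp
        have hpD : p ∈ D := hQD hpQ
        have hlt : dist o p < dist o qref :=
          lt_of_le_of_ne (hmax p hpQ) (hdistinct p hpD qref (hQD hqref) hpne)
        exact Finset.mem_filter.2 ⟨Finset.mem_erase.2 ⟨hpne, hpD⟩, hlt⟩
      · rw [Finset.mem_filter, Finset.mem_sdiff] at hp
        have hpne : p ≠ qref := fun e => absurd hp.2 (by simp [e])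
        exact Finset.mem_filter.2 ⟨Finset.mem_erase.2 ⟨hpne, hp.1.1⟩, hp.2⟩
    have hdisj : Disjoint (Q.erase qref)
        ((D \ Q).filter (fun p => dist o p < dist o qref)) := by
      refine Finset.disjoint_left.2 fun p hp hpF => ?_
      exact (Finset.mem_sdiff.1 (Finset.mem_filter.1 hpF).1).2 (Finset.mem_of_mem_erase hp)
    have hcard := Finset.card_le_card hsub
    rw [Finset.card_union_of_disjoint hdisj, Finset.card_erase_of_mem hqref] at hcard
    omega
  · intro h q hq
    have hsub : (D.erase q).filter (fun p => dist o p < dist o q) ⊆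
        Q.erase qref ∪ (D \ Q).filter (fun p => dist o p < dist o qref) := by
      intro p hp
      rw [Finset.mem_filter, Finset.mem_erase] at hp
      obtain ⟨⟨hpq, hpD⟩, hplt⟩ := hp
      have hlt : dist o p < dist o qref := lt_of_lt_of_le hplt (hmax q hq)
      by_cases hpQ : p ∈ Q
      · have hpne : p ≠ qref := fun e => absurd hlt (by simp [e])
        exact Finset.mem_union_left _ (Finset.mem_erase.2 ⟨hpne, hpQ⟩)
      · exact Finset.mem_union_right _
          (Finset.mem_filter.2 ⟨Finset.mem_sdiff.2 ⟨hpD, hpQ⟩, hlt⟩)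
    have hcard := (Finset.card_le_card hsub).trans (Finset.card_union_le _ _)
    rw [Finset.card_erase_of_mem hqref] at hcard
    omega
end

section
/- Let q, o ∈ R^d with o ≠ q and let x ∈ PR_q(o) (the pruning region of o with respect to q, as defined via coordinate-wise half-space intersections at midpoints (q_i+o_i)/2). Then q is not in the dynamic skyline of x: o dominates q w.r.t. x, meaning |x_i - o_i| <= |x_i - q_i| for all i and, if additionally q_i ≠ o_i for some i and x_i ≠ (q_i+o_i)/2 in that coordinate, the inequality is strict in that coordinate. -/
open scoped Classical

/-- The pruning region of `o` with respect to `q`. -/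
def pruningRegion {d : ℕ} (q o : EuclideanSpace ℝ (Fin d)) :
    Set (EuclideanSpace ℝ (Fin d)) :=
  {x | ∀ i : Fin d, if q i ≤ o i then (q i + o i) / 2 ≤ x i else x i ≤ (q i + o i) / 2}

/-- For `x ∈ PR_q(o)`, `o` dominates `q` with respect to `x`: coordinate-wise
`|x_i - o_i| ≤ |x_i - q_i|`, and strictly in any coordinate where `q_i ≠ o_i` and
`x_i` is off the bisecting midpoint. -/
theorem pruningRegion_strict_dominance {d : ℕ}
    (q o : EuclideanSpace ℝ (Fin d)) (hne : o ≠ q)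
    (x : EuclideanSpace ℝ (Fin d)) (hx : x ∈ pruningRegion q o) :
    (∀ i : Fin d, |x i - o i| ≤ |x i - q i|) ∧
      (∀ i : Fin d, q i ≠ o i → x i ≠ (q i + o i) / 2 → |x i - o i| < |x i - q i|) := by
  constructor
  · intro i
    have h := hx i
    split_ifs at h with hq
    · rcases abs_cases (x i - o i) with ⟨e1, _⟩ | ⟨e1, _⟩ <;>
      rcases abs_cases (x i - q i) with ⟨e2, _⟩ | ⟨e2, _⟩ <;> linarith
    · push_neg at hq
      rcases abs_cases (x i - o i) with ⟨e1, _⟩ | ⟨e1, _⟩ <;>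
      rcases abs_cases (x i - q i) with ⟨e2, _⟩ | ⟨e2, _⟩ <;> linarith
  · intro i hqo hmid
    have h := hx i
    have hmid' : x i < (q i + o i) / 2 ∨ (q i + o i) / 2 < x i := lt_or_gt_of_ne hmid
    split_ifs at h with hq
    · have hq' : q i < o i := lt_of_le_of_ne hq hqo
      have h2 : (q i + o i) / 2 < x i := by rcases hmid' with h' | h' <;> [linarith; exact h']
      rcases abs_cases (x i - o i) with ⟨e1, _⟩ | ⟨e1, _⟩ <;>
      rcases abs_cases (x i - q i) with ⟨e2, _⟩ | ⟨e2, _⟩ <;> linarith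
    · push_neg at hq
      have h2 : x i < (q i + o i) / 2 := by rcases hmid' with h' | h' <;> [exact h'; linarith]
      rcases abs_cases (x i - o i) with ⟨e1, _⟩ | ⟨e1, _⟩ <;>
      rcases abs_cases (x i - q i) with ⟨e2, _⟩ | ⟨e2, _⟩ <;> linarith
end
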